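/- arXiv:2306.11474 — 4 statements merged into one kernel-verified Lean document; each statement's English description precedes it below -/
import Mathlib

section
/- Suppose symmetric matrices P > 0 and matrices A, B, C, L, W satisfy P·A + Aᵀ·P = -LᵀL - ε·P with ε ≥ 0, P·B = Cᵀ - Lᵀ·W, and Wᵀ·W = D + Dᵀ. Then for the storage function V(x) = ½ xᵀ P x and any trajectory with ẋ = A x + B u, y = C x + D u, one has ⟨u, y⟩ - dV/dt = ½ ‖L x + W u‖² + (ε/2) xᵀ P x ≥ ε V(x). -/
open Matrix

lemma quad_hasDerivAt {m : ℕ} (P : Matrix (Fin m) (Fin m) ℝ)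
    (x : ℝ → Fin m → ℝ) (x' : Fin m → ℝ) (t : ℝ) (hx : HasDerivAt x x' t) :
    HasDerivAt (fun s => x s ⬝ᵥ P *ᵥ x s) (x' ⬝ᵥ P *ᵥ x t + x t ⬝ᵥ P *ᵥ x') t := by
  have hxi : ∀ i, HasDerivAt (fun s => x s i) (x' i) t := fun i =>
    (hasDerivAt_pi.mp hx) i
  have h : HasDerivAt (fun s => ∑ i, ∑ j, x s i * (P i j * x s j))
      (∑ i, ∑ j, (x' i * (P i j * x t j) + x t i * (P i j * x' j))) t := by
    apply HasDerivAt.fun_sum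
    intro i _
    apply HasDerivAt.fun_sum
    intro j _
    exact (hxi i).mul ((hxi j).const_mul (P i j))
  have e1 : (fun s => x s ⬝ᵥ P *ᵥ x s) = fun s => ∑ i, ∑ j, x s i * (P i j * x s j) := by
    funext s
    simp [dotProduct, mulVec, Finset.mul_sum]
  have e2 : x' ⬝ᵥ P *ᵥ x t + x t ⬝ᵥ P *ᵥ x'
      = ∑ i, ∑ j, (x' i * (P i j * x t j) + x t i * (P i j * x' j)) := by
    simp [dotProduct, mulVec, Finset.mul_sum, Finset.sum_add_distrib]
  rw [e1, e2]
  exact h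

lemma dot_transpose_mulVec {m n : ℕ} (M : Matrix (Fin m) (Fin n) ℝ)
    (v : Fin n → ℝ) (w : Fin m → ℝ) : v ⬝ᵥ Mᵀ *ᵥ w = (M *ᵥ v) ⬝ᵥ w := by
  simp only [dotProduct, mulVec, transpose_apply, Finset.mul_sum, Finset.sum_mul]
  rw [Finset.sum_comm]
  exact Finset.sum_congr rfl fun i _ => Finset.sum_congr rfl fun j _ => by ring

lemma dot_self_nonneg' {n : ℕ} (v : Fin n → ℝ) : 0 ≤ v ⬝ᵥ v :=
  Finset.sum_nonneg fun i _ => mul_self_nonneg (v i)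

/-- KYP storage-function inequality: if `P A + Aᵀ P = -LᵀL - ε P`, `P B = Cᵀ - Lᵀ W`,
`Wᵀ W = D + Dᵀ`, then along any trajectory of `ẋ = A x + B u`, `y = C x + D u`,
the storage function `V = ½ xᵀ P x` satisfies
`⟨u,y⟩ - V̇ = ½‖Lx + Wu‖² + (ε/2) xᵀ P x ≥ ε V`. -/
theorem kyp_storage_inequality (m n : ℕ)
    (A : Matrix (Fin m) (Fin m) ℝ) (B : Matrix (Fin m) (Fin n) ℝ)
    (C : Matrix (Fin n) (Fin m) ℝ) (D : Matrix (Fin n) (Fin n) ℝ)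
    (L : Matrix (Fin n) (Fin m) ℝ) (W : Matrix (Fin n) (Fin n) ℝ)
    (P : Matrix (Fin m) (Fin m) ℝ) (ε : ℝ)
    (hP : P.IsSymm) (hPpos : P.PosDef) (hε : 0 ≤ ε)
    (hKYP_A : P * A + Aᵀ * P = -(Lᵀ * L) - ε • P)
    (hKYP_BC : P * B = Cᵀ - Lᵀ * W)
    (hKYP_D : Wᵀ * W = D + Dᵀ)
    (x : ℝ → Fin m → ℝ) (u y : ℝ → Fin n → ℝ)
    (hx : ∀ t, HasDerivAt x (A *ᵥ x t + B *ᵥ u t) t)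
    (hy : ∀ t, y t = C *ᵥ x t + D *ᵥ u t)
    (t : ℝ) :
    ∃ Vdot : ℝ,
      HasDerivAt (fun s => (1 / 2) * (x s ⬝ᵥ P *ᵥ x s)) Vdot t ∧
      u t ⬝ᵥ y t - Vdot =
        (1 / 2) * ((L *ᵥ x t + W *ᵥ u t) ⬝ᵥ (L *ᵥ x t + W *ᵥ u t))
          + (ε / 2) * (x t ⬝ᵥ P *ᵥ x t) ∧
      ε * ((1 / 2) * (x t ⬝ᵥ P *ᵥ x t)) ≤ u t ⬝ᵥ y t - Vdot := by
  set xt := x t with hxt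
  set ut := u t with hut
  set x' := A *ᵥ xt + B *ᵥ ut with hx'
  have hPswap : ∀ (v w : Fin m → ℝ), (P *ᵥ v) ⬝ᵥ w = v ⬝ᵥ P *ᵥ w := fun v w => by
    rw [← dot_transpose_mulVec P v w, hP.eq]
  have hPsym : ∀ v w : Fin m → ℝ, v ⬝ᵥ P *ᵥ w = w ⬝ᵥ P *ᵥ v := by
    intro v w
    rw [← hPswap w v, dotProduct_comm]
  have hderiv : HasDerivAt (fun s => (1 / 2) * (x s ⬝ᵥ P *ᵥ x s))
      ((1 / 2) * (x' ⬝ᵥ P *ᵥ xt + xt ⬝ᵥ P *ᵥ x')) t :=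
    (quad_hasDerivAt P x x' t (hx t)).const_mul (1 / 2)
  have hVd : (1 / 2) * (x' ⬝ᵥ P *ᵥ xt + xt ⬝ᵥ P *ᵥ x') = xt ⬝ᵥ P *ᵥ x' := by
    rw [hPsym x' xt]; ring
  rw [hVd] at hderiv
  have hA : 2 * (xt ⬝ᵥ P *ᵥ (A *ᵥ xt)) =
      -((L *ᵥ xt) ⬝ᵥ (L *ᵥ xt)) - ε * (xt ⬝ᵥ P *ᵥ xt) := by
    have h := congrArg (fun M => xt ⬝ᵥ M *ᵥ xt) hKYP_A
    simp only [add_mulVec, sub_mulVec, neg_mulVec, dotProduct_add, dotProduct_sub,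
      dotProduct_neg, ← mulVec_mulVec, smul_mulVec, dotProduct_smul,
      smul_eq_mul] at h
    rw [dot_transpose_mulVec A, dot_transpose_mulVec L] at h
    linarith [hPswap xt (A *ᵥ xt), dotProduct_comm (A *ᵥ xt) (P *ᵥ xt)]
  have hBC : xt ⬝ᵥ P *ᵥ (B *ᵥ ut) =
      (C *ᵥ xt) ⬝ᵥ ut - (L *ᵥ xt) ⬝ᵥ (W *ᵥ ut) := by
    have h := congrArg (fun M => xt ⬝ᵥ M *ᵥ ut) hKYP_BC
    simp only [sub_mulVec, dotProduct_sub, ← mulVec_mulVec] at h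
    rw [dot_transpose_mulVec C, dot_transpose_mulVec L] at h
    exact h
  have hD : (W *ᵥ ut) ⬝ᵥ (W *ᵥ ut) = 2 * (ut ⬝ᵥ D *ᵥ ut) := by
    have h := congrArg (fun M => ut ⬝ᵥ M *ᵥ ut) hKYP_D
    simp only [add_mulVec, dotProduct_add, ← mulVec_mulVec] at h
    rw [dot_transpose_mulVec W, dot_transpose_mulVec D] at h
    linarith [dotProduct_comm (D *ᵥ ut) ut]
  have huy : ut ⬝ᵥ y t = (C *ᵥ xt) ⬝ᵥ ut + ut ⬝ᵥ D *ᵥ ut := by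
    rw [hy t, dotProduct_add, dotProduct_comm ut (C *ᵥ xt)]
  have hVexp : xt ⬝ᵥ P *ᵥ x' = xt ⬝ᵥ P *ᵥ (A *ᵥ xt) + xt ⬝ᵥ P *ᵥ (B *ᵥ ut) := by
    rw [hx', mulVec_add, dotProduct_add]
  have hcross : (L *ᵥ xt + W *ᵥ ut) ⬝ᵥ (L *ᵥ xt + W *ᵥ ut) =
      (L *ᵥ xt) ⬝ᵥ (L *ᵥ xt) + 2 * ((L *ᵥ xt) ⬝ᵥ (W *ᵥ ut)) +
        (W *ᵥ ut) ⬝ᵥ (W *ᵥ ut) := by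
    rw [add_dotProduct, dotProduct_add, dotProduct_add,
      dotProduct_comm (W *ᵥ ut) (L *ᵥ xt)]
    ring
  have hkey : ut ⬝ᵥ y t - xt ⬝ᵥ P *ᵥ x' =
      (1 / 2) * ((L *ᵥ xt + W *ᵥ ut) ⬝ᵥ (L *ᵥ xt + W *ᵥ ut))
        + (ε / 2) * (xt ⬝ᵥ P *ᵥ xt) := by
    rw [huy, hVexp, hBC, hcross, hD]
    linarith
  refine ⟨xt ⬝ᵥ P *ᵥ x', hderiv, hkey, ?_⟩
  rw [hkey]
  have := dot_self_nonneg' (L *ᵥ xt + W *ᵥ ut)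
  linarith
end

section
/- Let f be convex and differentiable, γ : ℝ → ℝ positive and differentiable with γ̇ > 0, θ_c ∈ ℝⁿ, and define θ(v,t) = γ(t)⁻¹ v + θ_c and U(v,t) = γ(t)[f(θ(v,t)) - f(θ_c)] + ψ(v,t) where ∂ψ/∂t ≤ 0. Then for any differentiable curve v(t), the partial time derivative satisfies ∂U/∂t(v(t),t) = -γ̇(t) D_f(θ_c, θ(v(t),t)) + ∂ψ/∂t(v(t),t) ≤ 0, where D_f is the Bregman divergence. -/
open InnerProductSpace

lemma grad_ineq {E : Type*} [NormedAddCommGroup E] [InnerProductSpace ℝ E] [CompleteSpace E]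
    {f : E → ℝ} (hconv : ConvexOn ℝ Set.univ f) {x gx : E}
    (hg : HasGradientAt f gx x) (y : E) :
    (inner ℝ gx (y - x) : ℝ) ≤ f y - f x := by
  set d : ℝ := inner ℝ gx (y - x)
  have hline : HasDerivAt (fun a : ℝ => x + a • (y - x)) (y - x) 0 := by
    simpa using ((hasDerivAt_id (0:ℝ)).smul_const (y - x)).const_add x
  have hφ : HasDerivAt (fun a : ℝ => f (x + a • (y - x))) d 0 := by
    have hg' : HasFDerivAt f ((toDual ℝ E) gx) (x + (0:ℝ) • (y - x)) := by
      simpa using hasGradientAt_iff_hasFDerivAt.mp hg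
    have := hg'.comp_hasDerivAt 0 hline
    simpa [d, Function.comp_def] using this
  have hslope := hasDerivAt_iff_tendsto_slope.mp hφ
  have hslope' : Filter.Tendsto (slope (fun a : ℝ => f (x + a • (y - x))) 0)
      (nhdsWithin 0 (Set.Ioi 0)) (nhds d) :=
    hslope.mono_left (nhdsWithin_mono _ (fun a ha => ne_of_gt ha))
  have hbound : ∀ᶠ a in nhdsWithin (0:ℝ) (Set.Ioi 0),
      slope (fun a : ℝ => f (x + a • (y - x))) 0 a ≤ f y - f x := by
    filter_upwards [Ioo_mem_nhdsGT_of_mem (by norm_num : (0:ℝ) ∈ Set.Ico 0 1)] with a ha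
    have h1 : x + a • (y - x) = (1 - a) • x + a • y := by
      module
    have h2 : f (x + a • (y - x)) ≤ (1 - a) * f x + a * f y := by
      rw [h1]
      exact hconv.2 (Set.mem_univ x) (Set.mem_univ y) (by linarith [ha.2]) ha.1.le (by ring)
    have : slope (fun a : ℝ => f (x + a • (y - x))) 0 a = (f (x + a • (y - x)) - f x) / a := by simp [slope_def_field]
    rw [this, div_le_iff₀ ha.1]; nlinarith [ha.1]
  exact le_of_tendsto hslope' hbound
/-- With `θ(v,t) = γ(t)⁻¹ v + θ_c` and
`U(v,t) = γ(t)[f(θ(v,t)) - f(θ_c)] + ψ(v,t)`, the partial time derivative of `U`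
for fixed `v` equals `-γ̇(t) D_f(θ_c, θ(v,t)) + ∂ψ/∂t(v,t)` and is nonpositive,
where `D_f` is the Bregman divergence of the convex function `f`. -/
theorem partial_time_derivative_of_U (n : ℕ)
    (f : EuclideanSpace ℝ (Fin n) → ℝ) (g : EuclideanSpace ℝ (Fin n) → EuclideanSpace ℝ (Fin n))
    (hconv : ConvexOn ℝ Set.univ f)
    (hgrad : ∀ x, HasGradientAt f (g x) x)
    (γ γ' : ℝ → ℝ)
    (hγd : ∀ t, HasDerivAt γ (γ' t) t)
    (hγpos : ∀ t, 0 < γ t) (hγ'pos : ∀ t, 0 < γ' t)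
    (θc : EuclideanSpace ℝ (Fin n))
    (ψ ψt : EuclideanSpace ℝ (Fin n) → ℝ → ℝ)
    (hψd : ∀ v t, HasDerivAt (fun s => ψ v s) (ψt v t) t)
    (hψt : ∀ v t, ψt v t ≤ 0)
    -- Bregman divergence
    (Df : EuclideanSpace ℝ (Fin n) → EuclideanSpace ℝ (Fin n) → ℝ)
    (hDf : ∀ p q, Df p q = f p - f q - (inner ℝ (g q) (p - q) : ℝ))
    (v : EuclideanSpace ℝ (Fin n)) (t : ℝ) :
    HasDerivAt (fun s => γ s * (f ((γ s)⁻¹ • v + θc) - f θc) + ψ v s)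
        (-(γ' t) * Df θc ((γ t)⁻¹ • v + θc) + ψt v t) t ∧
    -(γ' t) * Df θc ((γ t)⁻¹ • v + θc) + ψt v t ≤ 0 := by
  have hγne : γ t ≠ 0 := (hγpos t).ne'
  set θt : EuclideanSpace ℝ (Fin n) := (γ t)⁻¹ • v + θc with hθt
  set I : ℝ := inner ℝ (g θt) v with hI
  -- derivative of the curve s ↦ (γ s)⁻¹ • v + θc
  have hinv : HasDerivAt (fun s => (γ s)⁻¹) (-(γ' t) / (γ t)^2) t := (hγd t).inv hγne
  have hθd : HasDerivAt (fun s => (γ s)⁻¹ • v + θc) ((-(γ' t) / (γ t)^2) • v) t :=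
    (hinv.smul_const v).add_const θc
  have hgf : HasFDerivAt f ((InnerProductSpace.toDual ℝ _) (g θt)) θt :=
    hasGradientAt_iff_hasFDerivAt.mp (hgrad θt)
  have hfθ : HasDerivAt (fun s => f ((γ s)⁻¹ • v + θc))
      ((-(γ' t) / (γ t)^2) * I) t := by
    have := hgf.comp_hasDerivAt t hθd
    simpa [hI, inner_smul_right, mul_comm, Function.comp_def] using this
  have hmain : HasDerivAt (fun s => γ s * (f ((γ s)⁻¹ • v + θc) - f θc) + ψ v s)
      (γ' t * (f θt - f θc) + γ t * ((-(γ' t) / (γ t)^2) * I) + ψt v t) t :=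
    ((hγd t).mul (hfθ.sub_const (f θc))).add (hψd v t)
  have hDfval : Df θc θt = f θc - f θt + (γ t)⁻¹ * I := by
    rw [hDf]
    have : θc - θt = -((γ t)⁻¹ • v) := by rw [hθt]; abel
    rw [this]
    simp [hI, inner_neg_right, inner_smul_right]
  have hval : γ' t * (f θt - f θc) + γ t * ((-(γ' t) / (γ t)^2) * I) + ψt v t
      = -(γ' t) * Df θc θt + ψt v t := by
    rw [hDfval]; field_simp; ring
  constructor
  · rw [← hval]; exact hmain
  · have hDfnn : 0 ≤ Df θc θt := by
      have := grad_ineq hconv (hgrad θt) θc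
      rw [hDf]; linarith
    have : -(γ' t) * Df θc θt ≤ 0 :=
      mul_nonpos_of_nonpos_of_nonneg (by linarith [hγ'pos t]) hDfnn
    linarith [hψt v t]
end

section
/- In the m = 1 case with a₀ = 0, ψ ≡ 0, α(t) = k t (k ≠ 0), γ(t) = (c/2)α(t)² and c = 2P, the second-order optimisation ODE reduces exactly to Nesterov's ODE: θ̈(t) + (3/t)θ̇(t) + ∇f(θ(t)) = 0 for t > 0. -/
/-- With `a₀ = 0`, `ψ ≡ 0`, `α(t) = k t` (`k ≠ 0`), `γ(t) = (c/2) α(t)²`, `c = 2P`,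
the second-order optimisation ODE
`θ̈ + (2γ̇/γ - α̇/α) θ̇ + (γ̈/γ - (α̇/α)(γ̇/γ))(θ - θ_c) + (Pα²/γ) ∇f(θ) = 0`
reduces exactly to Nesterov's ODE `θ̈ + (3/t) θ̇ + ∇f(θ) = 0` for `t > 0`. -/
theorem nesterov_ode_recovery (n : ℕ)
    (P k c : ℝ) (hP : 0 < P) (hk : k ≠ 0) (hc : c = 2 * P)
    (α γ : ℝ → ℝ)
    (hα : ∀ s, α s = k * s)
    (hγ : ∀ s, γ s = (c / 2) * (α s) ^ 2)
    (f : (Fin n → ℝ) → ℝ) (gf : (Fin n → ℝ) → Fin n → ℝ)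
    (θc : Fin n → ℝ)
    (θ θ' θ'' : Fin n → ℝ) (t : ℝ) (ht : 0 < t)
    (hode : θ'' + (2 * deriv γ t / γ t - deriv α t / α t) • θ'
        + (deriv (deriv γ) t / γ t - (deriv α t / α t) * (deriv γ t / γ t)) • (θ - θc)
        + (P * (α t) ^ 2 / γ t) • gf θ = 0) :
    θ'' + (3 / t) • θ' + gf θ = 0 := by
  have hαf : α = fun s => k * s := funext hα
  have hγf : γ = fun s => (P * k ^ 2) * s ^ 2 := funext fun s => by
    rw [hγ s, hα s, hc]; ring
  have hdα : deriv α = fun s => k := by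
    rw [hαf]; funext s
    simpa using (((hasDerivAt_id s).const_mul k).deriv)
  have hdγ : deriv γ = fun s => (P * k ^ 2) * (2 * s) := by
    rw [hγf]; funext s
    have := (((hasDerivAt_pow 2 s)).const_mul (P * k ^ 2)).deriv
    simpa [mul_comm, mul_assoc, mul_left_comm] using this
  have hddγ : deriv (deriv γ) t = 2 * (P * k ^ 2) := by
    rw [hdγ]
    have := (((hasDerivAt_id t).const_mul 2).const_mul (P * k ^ 2)).deriv
    simpa [mul_comm, mul_assoc, mul_left_comm] using this
  have ht' : t ≠ 0 := ne_of_gt ht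
  have hPk : P * k ^ 2 ≠ 0 := by positivity
  have h1 : 2 * deriv γ t / γ t - deriv α t / α t = 3 / t := by
    rw [hdγ, hdα, hγf, hαf]; field_simp; ring
  have h2 : deriv (deriv γ) t / γ t - (deriv α t / α t) * (deriv γ t / γ t) = 0 := by
    rw [hddγ, hdγ, hdα, hγf, hαf]; field_simp; ring
  have h3 : P * (α t) ^ 2 / γ t = 1 := by
    rw [hγf, hαf]; field_simp
  rw [h1, h2, h3, zero_smul, add_zero, one_smul] at hode
  exact hode
end

section
/- Suppose θ : (0,∞) → ℝⁿ is twice differentiable and solves θ̈ + (3/t)θ̇ + ∇f(θ) = 0, where f is convex differentiable with minimizer θ_*. Define v(t) = Pk²t²(θ(t) - θ_*), x(t) = (P·kt)⁻¹ v̇(t), E = Pk²t₀²(f(θ(t₀)) - f(θ_*)) + ½P x(t₀)ᵀ x(t₀). Then f(θ(t)) - f(θ_*) ≤ E/(Pk²t²) for all t ≥ t₀ > 0. -/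
open RealInnerProductSpace

/-- First-order condition for convex differentiable functions. -/
lemma grad_convex_ineq {n : ℕ} {f : EuclideanSpace ℝ (Fin n) → ℝ}
    (hconv : ConvexOn ℝ Set.univ f) {x g : EuclideanSpace ℝ (Fin n)}
    (hg : HasGradientAt f g x) (y : EuclideanSpace ℝ (Fin n)) :
    f x + ⟪g, y - x⟫ ≤ f y := by
  have hφconv : ConvexOn ℝ Set.univ (f ∘ (AffineMap.lineMap x y : ℝ →ᵃ[ℝ] _)) := by
    simpa using hconv.comp_affineMap (AffineMap.lineMap x y : ℝ →ᵃ[ℝ] _)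
  have hline : HasDerivAt (fun s : ℝ => (AffineMap.lineMap x y : ℝ →ᵃ[ℝ] _) s) (y - x) 0 := by
    have h1 : HasDerivAt (fun s : ℝ => ((1 : ℝ) - s) • x) (-x) 0 := by
      simpa using ((hasDerivAt_const (0:ℝ) (1:ℝ)).sub (hasDerivAt_id 0)).smul_const x
    have h2 : HasDerivAt (fun s : ℝ => s • y) y 0 := by
      simpa using (hasDerivAt_id (0:ℝ)).smul_const y
    have h3 := h1.add h2
    have heq : (fun s : ℝ => (AffineMap.lineMap x y : ℝ →ᵃ[ℝ] _) s)
        = fun s : ℝ => ((1 : ℝ) - s) • x + s • y := by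
      funext s
      simp [AffineMap.lineMap_apply_module]
    rw [heq]
    refine h3.congr_deriv ?_
    abel
  have hφd : HasDerivAt (f ∘ (AffineMap.lineMap x y : ℝ →ᵃ[ℝ] _)) ⟪g, y - x⟫ 0 := by
    have hg' : HasFDerivAt f ((InnerProductSpace.toDual ℝ (EuclideanSpace ℝ (Fin n))) g)
        ((AffineMap.lineMap x y : ℝ →ᵃ[ℝ] _) 0) := by
      simpa using hg.hasFDerivAt
    have := hg'.comp_hasDerivAt 0 hline
    simpa using this
  have hs := hφconv.le_slope_of_hasDerivAt (Set.mem_univ (0 : ℝ)) (Set.mem_univ (1 : ℝ))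
    zero_lt_one hφd
  rw [slope_def_field] at hs
  simp only [Function.comp_apply, AffineMap.lineMap_apply_one, AffineMap.lineMap_apply_zero] at hs
  rw [sub_zero, div_one] at hs
  linarith

/-- `O(1/t²)` convergence of Nesterov's ODE `θ̈ + (3/t) θ̇ + ∇f(θ) = 0` for convex `f`
with global minimiser `θ_*`, via the conservation law of the passivity framework:
with `v(t) = P k² t² (θ(t) - θ_*)`, `x(t) = (P k t)⁻¹ v̇(t)` and
`E = P k² t₀² (f(θ(t₀)) - f(θ_*)) + ½ P ‖x(t₀)‖²`, one has
`f(θ(t)) - f(θ_*) ≤ E / (P k² t²)` for all `t ≥ t₀ > 0`. -/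
theorem nesterov_ode_convergence_rate (n : ℕ)
    (f : EuclideanSpace ℝ (Fin n) → ℝ)
    (gf : EuclideanSpace ℝ (Fin n) → EuclideanSpace ℝ (Fin n))
    (hconv : ConvexOn ℝ Set.univ f)
    (hgrad : ∀ y, HasGradientAt f (gf y) y)
    (θstar : EuclideanSpace ℝ (Fin n)) (hmin : ∀ y, f θstar ≤ f y)
    (P k : ℝ) (hP : 0 < P) (hk : k ≠ 0)
    (t₀ : ℝ) (ht₀ : 0 < t₀)
    (θ θ' θ'' : ℝ → EuclideanSpace ℝ (Fin n))
    (hθd : ∀ t, 0 < t → HasDerivAt θ (θ' t) t)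
    (hθd2 : ∀ t, 0 < t → HasDerivAt θ' (θ'' t) t)
    (hode : ∀ t, 0 < t → θ'' t + (3 / t) • θ' t + gf (θ t) = 0)
    (v x : ℝ → EuclideanSpace ℝ (Fin n))
    (hv : ∀ s, v s = (P * k ^ 2 * s ^ 2) • (θ s - θstar))
    (hx : ∀ s, x s = (P * k * s)⁻¹ • deriv v s)
    (E : ℝ)
    (hE : E = P * k ^ 2 * t₀ ^ 2 * (f (θ t₀) - f θstar) + (1 / 2) * P * ‖x t₀‖ ^ 2) :
    ∀ t, t₀ ≤ t → f (θ t) - f θstar ≤ E / (P * k ^ 2 * t ^ 2) := by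
  have hveq : v = fun s => (P * k ^ 2 * s ^ 2) • (θ s - θstar) := funext hv
  subst hveq
  have hk2 : (0:ℝ) < k ^ 2 := by positivity
  have hPk2 : (0:ℝ) < P * k ^ 2 := by positivity
  set w : ℝ → EuclideanSpace ℝ (Fin n) := fun s => (θ s - θstar) + (s / 2) • θ' s with hw
  set ℰ : ℝ → ℝ := fun s => s ^ 2 * (f (θ s) - f θstar) + 2 * ⟪w s, w s⟫ with hℰ
  -- derivative of w
  have hw' : ∀ t, 0 < t → HasDerivAt w (-(t / 2) • gf (θ t)) t := by
    intro t ht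
    have h1 : HasDerivAt (fun s => θ s - θstar) (θ' t) t := (hθd t ht).sub_const _
    have h2 := ((hasDerivAt_id t).div_const 2).smul (hθd2 t ht)
    have hsum := h1.add h2
    have hodet : θ'' t = -((3 / t) • θ' t) - gf (θ t) := by
      have h := hode t ht
      have : θ'' t + ((3 / t) • θ' t + gf (θ t)) = 0 := by
        rw [← add_assoc]; exact h
      have := eq_neg_of_add_eq_zero_left this
      rw [this]; abel
    refine hsum.congr_deriv ?_
    rw [hodet, id]
    have ht' : t ≠ 0 := ne_of_gt ht
    match_scalars <;> field_simp <;> ring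
  -- derivative of f ∘ θ
  have hfθ : ∀ t, 0 < t → HasDerivAt (fun s => f (θ s)) ⟪gf (θ t), θ' t⟫ t := by
    intro t ht
    have := (hgrad (θ t)).hasFDerivAt.comp_hasDerivAt t (hθd t ht)
    simp at this
    exact this
  -- derivative of ℰ
  have hℰ' : ∀ t, 0 < t →
      HasDerivAt ℰ (2 * t * ((f (θ t) - f θstar) - ⟪gf (θ t), θ t - θstar⟫)) t := by
    intro t ht
    have hA : HasDerivAt (fun s : ℝ => s ^ 2 * (f (θ s) - f θstar))
        (2 * t * (f (θ t) - f θstar) + t ^ 2 * ⟪gf (θ t), θ' t⟫) t := by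
      have := (hasDerivAt_pow 2 t).mul ((hfθ t ht).sub_const (f θstar))
      refine this.congr_deriv ?_
      push_cast; ring
    have hB : HasDerivAt (fun s => 2 * ⟪w s, w s⟫)
        (2 * (⟪w t, -(t / 2) • gf (θ t)⟫ + ⟪-(t / 2) • gf (θ t), w t⟫)) t :=
      ((hw' t ht).inner ℝ (hw' t ht)).const_mul 2
    have := hA.add hB
    refine this.congr_deriv ?_
    simp only [hw, inner_add_left, inner_add_right, real_inner_smul_left,
      real_inner_smul_right, inner_neg_left, inner_neg_right, inner_sub_left, inner_sub_right]
    rw [real_inner_comm (θ t) (gf (θ t)), real_inner_comm θstar (gf (θ t)),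
      real_inner_comm (θ' t) (gf (θ t))]
    ring
  -- the derivative is nonpositive
  have hD : ∀ t, 0 < t → 2 * t * ((f (θ t) - f θstar) - ⟪gf (θ t), θ t - θstar⟫) ≤ 0 := by
    intro t ht
    have h := grad_convex_ineq hconv (hgrad (θ t)) θstar
    have h2 : ⟪gf (θ t), θstar - θ t⟫ = -⟪gf (θ t), θ t - θstar⟫ := by
      rw [← inner_neg_right]; congr 1; abel
    rw [h2] at h
    nlinarith
  -- ℰ is antitone on [t₀, ∞)
  have hmono : AntitoneOn ℰ (Set.Ici t₀) := by
    apply antitoneOn_of_deriv_nonpos (convex_Ici t₀)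
    · intro s hs
      exact ((hℰ' s (lt_of_lt_of_le ht₀ hs)).continuousAt).continuousWithinAt
    · intro s hs
      rw [interior_Ici] at hs
      exact ((hℰ' s (lt_trans ht₀ hs)).differentiableAt).differentiableWithinAt
    · intro s hs
      rw [interior_Ici] at hs
      have hspos : 0 < s := lt_trans ht₀ hs
      rw [(hℰ' s hspos).deriv]
      exact hD s hspos
  -- compute x t₀
  have hvd : HasDerivAt (fun s : ℝ => (P * k ^ 2 * s ^ 2) • (θ s - θstar))
      ((P * k ^ 2 * (2 * t₀)) • (θ t₀ - θstar) + (P * k ^ 2 * t₀ ^ 2) • θ' t₀) t₀ := by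
    have hs : HasDerivAt (fun s : ℝ => P * k ^ 2 * s ^ 2) (P * k ^ 2 * (2 * t₀)) t₀ := by
      have := (hasDerivAt_pow 2 t₀).const_mul (P * k ^ 2)
      refine this.congr_deriv ?_; push_cast; ring
    have := hs.smul ((hθd t₀ ht₀).sub_const θstar)
    refine this.congr_deriv ?_
    abel
  have hxval : x t₀ = (2 * k) • w t₀ := by
    rw [hx t₀, hvd.deriv]
    have hPk : P * k * t₀ ≠ 0 := by positivity
    rw [hw]
    match_scalars <;> field_simp <;> ring
  have hxnorm : ‖x t₀‖ ^ 2 = 4 * k ^ 2 * ⟪w t₀, w t₀⟫ := by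
    rw [hxval, ← real_inner_self_eq_norm_sq, real_inner_smul_left, real_inner_smul_right]
    ring
  have hEeq : E = P * k ^ 2 * ℰ t₀ := by
    rw [hE, hxnorm, hℰ]; ring
  -- conclude
  intro t ht
  have htpos : 0 < t := lt_of_lt_of_le ht₀ ht
  have h1 : ℰ t ≤ ℰ t₀ := hmono (Set.self_mem_Ici) ht ht
  have h2 : t ^ 2 * (f (θ t) - f θstar) ≤ ℰ t := by
    have : (0:ℝ) ≤ ⟪w t, w t⟫ := real_inner_self_nonneg
    simp only [hℰ]; nlinarith
  rw [le_div_iff₀ (by positivity : (0:ℝ) < P * k ^ 2 * t ^ 2), hEeq]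
  nlinarith [mul_le_mul_of_nonneg_left (h2.trans h1) (le_of_lt hPk2)]
end
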